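/- Let G be a simple brick with a removable doubleton R, and let H := G − R be its underlying bipartite graph. Then for every vertex b of G, at most two of the edges of H incident with b are non-removable in H. -/

import Mathlib

/-! Preamble: definitions for matching covered graphs, bricks, removable
doubletons, R-compatible/R-thin edges, retracts, ladders, partial biwheels,
R-configurations, and the eleven infinite families. -/

/-- The graph has a perfect matching. -/
def HasPerfMatching {V : Type*} (G : SimpleGraph V) : Prop :=
  ∃ M : G.Subgraph, M.IsPerfectMatching

/-- A graph (with at least two vertices) is matching covered if it is connected
and each of its edges lies in some perfect matching. -/
def MatchingCovered {V : Type*} (G : SimpleGraph V) : Prop :=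
  2 ≤ Nat.card V ∧ G.Connected ∧
    ∀ e ∈ G.edgeSet, ∃ M : G.Subgraph, M.IsPerfectMatching ∧ e ∈ M.edgeSet

/-- An edge of a matching covered graph is removable if deleting it leaves a
matching covered graph. -/
def RemovableEdge {V : Type*} (G : SimpleGraph V) (e : Sym2 V) : Prop :=
  e ∈ G.edgeSet ∧ MatchingCovered (G.deleteEdges {e})

/-- The number of odd connected components. -/
noncomputable def oddCompCount {V : Type*} (G : SimpleGraph V) : ℕ :=
  Nat.card {c : G.ConnectedComponent // Odd (Nat.card c.supp)}

/-- `S` is a barrier of `G`: `S` is nonempty and the number of odd components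
of `G − S` equals `|S|`. -/
def IsBarrierOf {V : Type*} (G : SimpleGraph V) (S : Set V) : Prop :=
  S.Nonempty ∧ oddCompCount (G.induce (Sᶜ : Set V)) = S.ncard

/-- Bicritical: at least four vertices, and deleting any two distinct vertices
leaves a graph with a perfect matching. -/
def BicriticalGraph {V : Type*} (G : SimpleGraph V) : Prop :=
  4 ≤ Nat.card V ∧ ∀ u v : V, u ≠ v →
    HasPerfMatching (G.induce (({u, v} : Set V)ᶜ))

/-- 3-connected: at least four vertices, and deleting any set of at most two
vertices leaves a connected graph. -/
def ThreeConnectedGraph {V : Type*} (G : SimpleGraph V) : Prop :=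
  4 ≤ Nat.card V ∧ ∀ S : Set V, S.ncard ≤ 2 → (G.induce (Sᶜ : Set V)).Connected

/-- A brick is a 3-connected bicritical graph. -/
def BrickGraph {V : Type*} (G : SimpleGraph V) : Prop :=
  ThreeConnectedGraph G ∧ BicriticalGraph G

/-- `A`, `B` form a bipartition of `G`. -/
def BipartitionOf {V : Type*} (G : SimpleGraph V) (A B : Set V) : Prop :=
  A ∪ B = Set.univ ∧ Disjoint A B ∧ ∀ ⦃u v : V⦄, G.Adj u v → (u ∈ A ↔ v ∈ B)

/-- `G` is bipartite. -/
def BipartiteGraph {V : Type*} (G : SimpleGraph V) : Prop :=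
  ∃ A B : Set V, BipartitionOf G A B

/-- `{α, β}` is a removable doubleton of `G`: a pair of distinct edges whose
deletion leaves a bipartite matching covered graph. -/
def RemovableDoubleton {V : Type*} (G : SimpleGraph V) (α β : Sym2 V) : Prop :=
  α ≠ β ∧ α ∈ G.edgeSet ∧ β ∈ G.edgeSet ∧
    BipartiteGraph (G.deleteEdges {α, β}) ∧ MatchingCovered (G.deleteEdges {α, β})

/-- An `R`-brick: a brick with a fixed removable doubleton `R = {α, β}`. -/
def RBrick {V : Type*} (G : SimpleGraph V) (α β : Sym2 V) : Prop :=
  BrickGraph G ∧ RemovableDoubleton G α β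

/-- `V(R)`: the set of the four ends of the doubleton edges. -/
def VR {V : Type*} (α β : Sym2 V) : Set V := {v | v ∈ α ∨ v ∈ β}

/-- `e` is `R`-compatible: it is an edge of `H := G − R` and is removable in
both `G` and `H`. -/
def RCompatible {V : Type*} (G : SimpleGraph V) (α β e : Sym2 V) : Prop :=
  e ∈ (G.deleteEdges {α, β}).edgeSet ∧
    MatchingCovered (G.deleteEdges {e}) ∧
    MatchingCovered ((G.deleteEdges {α, β}).deleteEdges {e})

/-- `e` is `R`-thin: `R`-compatible, and every barrier of `G − e` has at most
two vertices. -/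
def RThin {V : Type*} (G : SimpleGraph V) (α β e : Sym2 V) : Prop :=
  RCompatible G α β e ∧
    ∀ S : Set V, IsBarrierOf (G.deleteEdges {e}) S → S.ncard ≤ 2

/-- The number of maximal nontrivial barriers of a graph. -/
noncomputable def barrierIndex {V : Type*} (G : SimpleGraph V) : ℕ :=
  Set.ncard {S : Set V | IsBarrierOf G S ∧ 2 ≤ S.ncard ∧
    ∀ T : Set V, IsBarrierOf G T → S ⊆ T → T = S}

/-- Degree of a vertex (as the cardinality of its neighbourhood). -/
noncomputable def degOf {V : Type*} (G : SimpleGraph V) (v : V) : ℕ :=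
  (G.neighborSet v).ncard

/-- The relation identifying each degree-two vertex with its neighbours
(bicontraction of all degree-two vertices at once). -/
def bicontractPairRel {V : Type*} (G : SimpleGraph V) (u v : V) : Prop :=
  G.Adj u v ∧ (degOf G u = 2 ∨ degOf G v = 2)

/-- The vertex identifications performed when taking the retract. -/
def retractSetoid {V : Type*} (G : SimpleGraph V) : Setoid V :=
  Relation.EqvGen.setoid (bicontractPairRel G)

/-- The retract of `G` (as a simple graph on the quotient). -/
def retractGraph {V : Type*} (G : SimpleGraph V) :
    SimpleGraph (Quotient (retractSetoid G)) where
  Adj X Y := X ≠ Y ∧ ∃ u v : V,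
    Quotient.mk (retractSetoid G) u = X ∧ Quotient.mk (retractSetoid G) v = Y ∧ G.Adj u v
  symm := by
    constructor
    rintro X Y ⟨hne, u, v, hu, hv, huv⟩
    exact ⟨hne.symm, v, u, hv, hu, huv.symm⟩
  loopless := by
    constructor
    rintro X ⟨hne, -⟩
    exact hne rfl

/-- The retract of `G` has a pair of parallel edges. -/
def retractHasParallel {V : Type*} (G : SimpleGraph V) : Prop :=
  ∃ p q p' q' : V, G.Adj p q ∧ G.Adj p' q' ∧ s(p, q) ≠ s(p', q') ∧
    ¬ Relation.EqvGen (bicontractPairRel G) p q ∧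
    ((Relation.EqvGen (bicontractPairRel G) p p' ∧
        Relation.EqvGen (bicontractPairRel G) q q') ∨
     (Relation.EqvGen (bicontractPairRel G) p q' ∧
        Relation.EqvGen (bicontractPairRel G) q p'))

/-- `e` is strictly `R`-thin: `R`-thin and the retract of `G − e` has no
parallel edges. -/
def StrictlyRThin {V : Type*} (G : SimpleGraph V) (α β e : Sym2 V) : Prop :=
  RThin G α β e ∧ ¬ retractHasParallel (G.deleteEdges {e})

/-- The ladder with `m` rungs: two paths `x₀…x_{m-1}` (first coordinate `0`)
and `y₀…y_{m-1}` (first coordinate `1`) together with the rungs `xᵢyᵢ`. -/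
def ladderGraph (m : ℕ) : SimpleGraph (Fin 2 × Fin m) :=
  SimpleGraph.fromRel (fun p q =>
    (p.1 = q.1 ∧ p.2.val + 1 = q.2.val) ∨ (p.1 ≠ q.1 ∧ p.2 = q.2))

/-- The partial biwheel on the odd path `x₀…x_{2k-1}` (the `inl` vertices)
with hubs `u = inr 0` (joined to the even-indexed path vertices) and
`w = inr 1` (joined to the odd-indexed path vertices). -/
def biwheelGraph (k : ℕ) : SimpleGraph (Fin (2 * k) ⊕ Fin 2) :=
  SimpleGraph.fromRel (fun p q =>
    match p, q with
    | Sum.inl i, Sum.inl j => i.val + 1 = j.val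
    | Sum.inr h, Sum.inl i => (h = 0 ∧ i.val % 2 = 0) ∨ (h = 1 ∧ i.val % 2 = 1)
    | _, _ => False)

/-- The subgraph `K` of `Γ` is a ladder with `m` rungs and corners `a u b w`:
`au` and `bw` are its external rungs, labelled according to the convention
that `a` and `w` lie in one colour class and `b` and `u` in the other. -/
def LadderOn {W : Type*} (Γ : SimpleGraph W) (K : Γ.Subgraph) (m : ℕ)
    (a u b w : W) : Prop :=
  ∃ (hm : 3 ≤ m) (φ : ladderGraph m ≃g K.coe),
    (φ ((0 : Fin 2), (⟨0, by omega⟩ : Fin m))).val = a ∧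
    (φ ((1 : Fin 2), (⟨0, by omega⟩ : Fin m))).val = u ∧
    (if m % 2 = 1 then
        (φ ((0 : Fin 2), (⟨m - 1, by omega⟩ : Fin m))).val = w ∧
        (φ ((1 : Fin 2), (⟨m - 1, by omega⟩ : Fin m))).val = b
      else
        (φ ((1 : Fin 2), (⟨m - 1, by omega⟩ : Fin m))).val = w ∧
        (φ ((0 : Fin 2), (⟨m - 1, by omega⟩ : Fin m))).val = b)

/-- The subgraph `K` of `Γ` is a partial biwheel (parameter `k`, order `2k+2`)
with ends `a`, `b` and hubs `u`, `w`; its external spokes are `au` and `bw`. -/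
def BiwheelOn {W : Type*} (Γ : SimpleGraph W) (K : Γ.Subgraph) (k : ℕ)
    (a u b w : W) : Prop :=
  ∃ (hk : 2 ≤ k) (φ : biwheelGraph k ≃g K.coe),
    (φ (Sum.inl (⟨0, by omega⟩ : Fin (2 * k)))).val = a ∧
    (φ (Sum.inl (⟨2 * k - 1, by omega⟩ : Fin (2 * k)))).val = b ∧
    (φ (Sum.inr 0)).val = u ∧
    (φ (Sum.inr 1)).val = w

/-- Truncated biwheel: a spanning partial biwheel plus the edges `aw`, `bu`. -/
def IsTruncatedBiwheel {V : Type*} (G : SimpleGraph V) : Prop :=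
  ∃ (K : G.Subgraph) (k : ℕ) (a u b w : V),
    BiwheelOn G K k a u b w ∧ K.verts = Set.univ ∧
    G.edgeSet = K.edgeSet ∪ {s(a, w), s(b, u)}

/-- Prism: a spanning odd ladder plus the edges `aw`, `bu`. -/
def IsPrism {V : Type*} (G : SimpleGraph V) : Prop :=
  ∃ (K : G.Subgraph) (m : ℕ) (a u b w : V),
    Odd m ∧ LadderOn G K m a u b w ∧ K.verts = Set.univ ∧
    G.edgeSet = K.edgeSet ∪ {s(a, w), s(b, u)}

/-- Möbius ladder: a spanning even ladder plus the edges `aw`, `bu`;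
by convention `K₄` is also a Möbius ladder. -/
def IsMobiusLadder {V : Type*} (G : SimpleGraph V) : Prop :=
  (∃ (K : G.Subgraph) (m : ℕ) (a u b w : V),
    Even m ∧ LadderOn G K m a u b w ∧ K.verts = Set.univ ∧
    G.edgeSet = K.edgeSet ∪ {s(a, w), s(b, u)}) ∨
  Nonempty (G ≃g (⊤ : SimpleGraph (Fin 4)))

/-- Staircase: a ladder plus two new vertices `a₂`, `b₂` and the five edges
`a a₂`, `u a₂`, `b b₂`, `w b₂`, `a₂ b₂`. -/
def IsStaircase {V : Type*} (G : SimpleGraph V) : Prop :=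
  ∃ (K : G.Subgraph) (m : ℕ) (a u b w a2 b2 : V),
    LadderOn G K m a u b w ∧
    a2 ∉ K.verts ∧ b2 ∉ K.verts ∧ a2 ≠ b2 ∧
    K.verts ∪ {a2, b2} = Set.univ ∧
    G.edgeSet = K.edgeSet ∪ {s(a, a2), s(u, a2), s(b, b2), s(w, b2), s(a2, b2)}

/-- Pseudo-biwheel: a partial biwheel of order at least eight plus two new
vertices `a₂`, `b₂` and the five edges `a a₂`, `u a₂`, `b b₂`, `w b₂`,
`a₂ b₂`. -/
def IsPseudoBiwheel {V : Type*} (G : SimpleGraph V) : Prop :=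
  ∃ (K : G.Subgraph) (k : ℕ) (a u b w a2 b2 : V),
    3 ≤ k ∧ BiwheelOn G K k a u b w ∧
    a2 ∉ K.verts ∧ b2 ∉ K.verts ∧ a2 ≠ b2 ∧
    K.verts ∪ {a2, b2} = Set.univ ∧
    G.edgeSet = K.edgeSet ∪ {s(a, a2), s(u, a2), s(b, b2), s(w, b2), s(a2, b2)}

/-- Double biwheel of type I: two partial biwheels sharing precisely their
hubs `u`, `w`, plus the edges `a₁a₂` and `b₁b₂`. -/
def IsDoubleBiwheelI {V : Type*} (G : SimpleGraph V) : Prop :=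
  ∃ (K1 K2 : G.Subgraph) (k1 k2 : ℕ) (a1 b1 a2 b2 u w : V),
    BiwheelOn G K1 k1 a1 u b1 w ∧ BiwheelOn G K2 k2 a2 u b2 w ∧
    K1.verts ∩ K2.verts = {u, w} ∧ K1.verts ∪ K2.verts = Set.univ ∧
    G.edgeSet = K1.edgeSet ∪ K2.edgeSet ∪ {s(a1, a2), s(b1, b2)}

/-- Double ladder of type I. -/
def IsDoubleLadderI {V : Type*} (G : SimpleGraph V) : Prop :=
  ∃ (K1 K2 : G.Subgraph) (m1 m2 : ℕ) (a1 b1 a2 b2 u w : V),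
    LadderOn G K1 m1 a1 u b1 w ∧ LadderOn G K2 m2 a2 u b2 w ∧
    K1.verts ∩ K2.verts = {u, w} ∧ K1.verts ∪ K2.verts = Set.univ ∧
    G.edgeSet = K1.edgeSet ∪ K2.edgeSet ∪ {s(a1, a2), s(b1, b2)}

/-- Laddered biwheel of type I. -/
def IsLadderedBiwheelI {V : Type*} (G : SimpleGraph V) : Prop :=
  ∃ (K1 K2 : G.Subgraph) (k1 m2 : ℕ) (a1 b1 a2 b2 u w : V),
    BiwheelOn G K1 k1 a1 u b1 w ∧ LadderOn G K2 m2 a2 u b2 w ∧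
    K1.verts ∩ K2.verts = {u, w} ∧ K1.verts ∪ K2.verts = Set.univ ∧
    G.edgeSet = K1.edgeSet ∪ K2.edgeSet ∪ {s(a1, a2), s(b1, b2)}

/-- Double biwheel of type II: two vertex-disjoint partial biwheels of order
at least eight plus the four edges `a₁a₂`, `b₁b₂`, `u₁w₂`, `w₁u₂`. -/
def IsDoubleBiwheelII {V : Type*} (G : SimpleGraph V) : Prop :=
  ∃ (K1 K2 : G.Subgraph) (k1 k2 : ℕ) (a1 u1 b1 w1 a2 u2 b2 w2 : V),
    3 ≤ k1 ∧ 3 ≤ k2 ∧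
    BiwheelOn G K1 k1 a1 u1 b1 w1 ∧ BiwheelOn G K2 k2 a2 u2 b2 w2 ∧
    K1.verts ∩ K2.verts = ∅ ∧ K1.verts ∪ K2.verts = Set.univ ∧
    G.edgeSet = K1.edgeSet ∪ K2.edgeSet ∪
      {s(a1, a2), s(b1, b2), s(u1, w2), s(w1, u2)}

/-- Double ladder of type II. -/
def IsDoubleLadderII {V : Type*} (G : SimpleGraph V) : Prop :=
  ∃ (K1 K2 : G.Subgraph) (m1 m2 : ℕ) (a1 u1 b1 w1 a2 u2 b2 w2 : V),
    LadderOn G K1 m1 a1 u1 b1 w1 ∧ LadderOn G K2 m2 a2 u2 b2 w2 ∧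
    K1.verts ∩ K2.verts = ∅ ∧ K1.verts ∪ K2.verts = Set.univ ∧
    G.edgeSet = K1.edgeSet ∪ K2.edgeSet ∪
      {s(a1, a2), s(b1, b2), s(u1, w2), s(w1, u2)}

/-- Laddered biwheel of type II. -/
def IsLadderedBiwheelII {V : Type*} (G : SimpleGraph V) : Prop :=
  ∃ (K1 K2 : G.Subgraph) (k1 m2 : ℕ) (a1 u1 b1 w1 a2 u2 b2 w2 : V),
    3 ≤ k1 ∧
    BiwheelOn G K1 k1 a1 u1 b1 w1 ∧ LadderOn G K2 m2 a2 u2 b2 w2 ∧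
    K1.verts ∩ K2.verts = ∅ ∧ K1.verts ∪ K2.verts = Set.univ ∧
    G.edgeSet = K1.edgeSet ∪ K2.edgeSet ∪
      {s(a1, a2), s(b1, b2), s(u1, w2), s(w1, u2)}

/-- Membership in one of the eleven infinite families. -/
def InEleven {V : Type*} (G : SimpleGraph V) : Prop :=
  IsTruncatedBiwheel G ∨ IsPrism G ∨ IsMobiusLadder G ∨ IsStaircase G ∨
  IsPseudoBiwheel G ∨ IsDoubleBiwheelI G ∨ IsDoubleLadderI G ∨
  IsLadderedBiwheelI G ∨ IsDoubleBiwheelII G ∨ IsDoubleLadderII G ∨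
  IsLadderedBiwheelII G

/-- An `R`-ladder configuration: a subgraph `K` of `H := G − R` which is a
ladder with external rungs `au` and `bw` (free corners `u`, `w`) such that
every vertex of `K` except possibly `u` and `w` is cubic in `G`, the corners
`a` and `b` lie in `V(R)`, and every internal rung is an `R`-thin edge of `G`
whose index is two. -/
def RLadderConfig {V : Type*} (G : SimpleGraph V) (α β : Sym2 V)
    (K : (G.deleteEdges {α, β}).Subgraph) (a u b w : V) : Prop :=
  ∃ (m : ℕ) (hm : 3 ≤ m) (φ : ladderGraph m ≃g K.coe),
    (φ ((0 : Fin 2), (⟨0, by omega⟩ : Fin m))).val = a ∧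
    (φ ((1 : Fin 2), (⟨0, by omega⟩ : Fin m))).val = u ∧
    (if m % 2 = 1 then
        (φ ((0 : Fin 2), (⟨m - 1, by omega⟩ : Fin m))).val = w ∧
        (φ ((1 : Fin 2), (⟨m - 1, by omega⟩ : Fin m))).val = b
      else
        (φ ((1 : Fin 2), (⟨m - 1, by omega⟩ : Fin m))).val = w ∧
        (φ ((0 : Fin 2), (⟨m - 1, by omega⟩ : Fin m))).val = b) ∧
    (∀ v ∈ K.verts, v ≠ u → v ≠ w → degOf G v = 3) ∧
    a ∈ VR α β ∧ b ∈ VR α β ∧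
    (∀ i : Fin m, 0 < i.val → i.val < m - 1 →
      RThin G α β s((φ ((0 : Fin 2), i)).val, (φ ((1 : Fin 2), i)).val) ∧
      barrierIndex
        (G.deleteEdges {s((φ ((0 : Fin 2), i)).val, (φ ((1 : Fin 2), i)).val)}) = 2)

/-- An `R`-biwheel configuration: a subgraph `K` of `H := G − R` which is a
partial biwheel with external spokes `au` and `bw` (hubs `u`, `w`) such that
the hubs are not cubic in `G`, every other vertex of `K` is cubic in `G`, the
ends `a` and `b` lie in `V(R)`, and every internal spoke is an `R`-thin edge
of `G` whose index is one. -/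
def RBiwheelConfig {V : Type*} (G : SimpleGraph V) (α β : Sym2 V)
    (K : (G.deleteEdges {α, β}).Subgraph) (a u b w : V) : Prop :=
  ∃ (k : ℕ) (hk : 2 ≤ k) (φ : biwheelGraph k ≃g K.coe),
    (φ (Sum.inl (⟨0, by omega⟩ : Fin (2 * k)))).val = a ∧
    (φ (Sum.inl (⟨2 * k - 1, by omega⟩ : Fin (2 * k)))).val = b ∧
    (φ (Sum.inr 0)).val = u ∧
    (φ (Sum.inr 1)).val = w ∧
    degOf G u ≠ 3 ∧ degOf G w ≠ 3 ∧
    (∀ v ∈ K.verts, v ≠ u → v ≠ w → degOf G v = 3) ∧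
    a ∈ VR α β ∧ b ∈ VR α β ∧
    (∀ e ∈ K.edgeSet, (u ∈ e ∨ w ∈ e) → e ≠ s(a, u) → e ≠ s(b, w) →
      RThin G α β e ∧ barrierIndex (G.deleteEdges {e}) = 1)

/-- An `R`-configuration: an `R`-ladder or an `R`-biwheel, with free corners
`u` and `w`. -/
def RConfig {V : Type*} (G : SimpleGraph V) (α β : Sym2 V)
    (K : (G.deleteEdges {α, β}).Subgraph) (a u b w : V) : Prop :=
  RLadderConfig G α β K a u b w ∨ RBiwheelConfig G α β K a u b w

/-- A 4-cycle on the four (distinct) vertices `v0 v1 v2 v3`. -/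
def Is4Cycle {V : Type*} (H : SimpleGraph V) (v0 v1 v2 v3 : V) : Prop :=
  v0 ≠ v1 ∧ v0 ≠ v2 ∧ v0 ≠ v3 ∧ v1 ≠ v2 ∧ v1 ≠ v3 ∧ v2 ≠ v3 ∧
  H.Adj v0 v1 ∧ H.Adj v1 v2 ∧ H.Adj v2 v3 ∧ H.Adj v3 v0

/-- The cut `∂(X)`. -/
def edgeCutOf {V : Type*} (G : SimpleGraph V) (X : Set V) : Set (Sym2 V) :=
  {e | e ∈ G.edgeSet ∧ ∃ p q : V, e = s(p, q) ∧ p ∈ X ∧ q ∉ X}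

/-- The cut `∂(X)` is tight: every perfect matching contains exactly one of
its edges. -/
def TightCut {V : Type*} (G : SimpleGraph V) (X : Set V) : Prop :=
  ∀ M : G.Subgraph, M.IsPerfectMatching → (M.edgeSet ∩ edgeCutOf G X).ncard = 1

/-- A brace: a bipartite matching covered graph with no nontrivial tight cut. -/
def IsBrace {V : Type*} (G : SimpleGraph V) : Prop :=
  BipartiteGraph G ∧ MatchingCovered G ∧
    ¬ ∃ X : Set V, 2 ≤ X.ncard ∧ 2 ≤ Xᶜ.ncard ∧ TightCut G X

/-!
Let `(A, B)` be the bipartition of `H = G - R`, with `b ∈ B`. If `ab` is a non-removable edge of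
the bipartite matching covered graph `H`, Hall's theorem applied to `H - ab` yields a tight set
`S ⊆ A`, i.e. `|N_H(S)| = |S| + 1`, containing `a` but no other neighbour of `b`. As
`S ↦ |N_H(S)|` is submodular and every nonempty proper subset of `A` has surplus, the tight sets
of three such edges at `b` are pairwise disjoint. On the other hand `G` is bicritical: some edge
of `R` lies inside `B`, so all ends of `R` in `A` lie on the other edge `γ`, and every tight set on
side `A` meets `γ`, since otherwise deleting two of its `|S| + 1` neighbours from `G` would leave
no perfect matching. Three disjoint sets cannot all meet the two ends of `γ`.
-/

open Function

namespace SimpleGraph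

variable {V : Type*} {G : SimpleGraph V}

namespace Subgraph.IsPerfectMatching

variable {M : G.Subgraph}

noncomputable def mate (hM : M.IsPerfectMatching) (v : V) : V := (hM.1 (hM.2 v)).choose

theorem adj_mate (hM : M.IsPerfectMatching) (v : V) : M.Adj v (hM.mate v) :=
  (hM.1 (hM.2 v)).choose_spec.1

theorem eq_mate_of_adj (hM : M.IsPerfectMatching) {v w : V} (h : M.Adj v w) : w = hM.mate v :=
  (hM.1 (hM.2 v)).choose_spec.2 w h

theorem mate_mate (hM : M.IsPerfectMatching) (v : V) : hM.mate (hM.mate v) = v :=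
  (hM.eq_mate_of_adj (hM.adj_mate v).symm).symm

theorem mate_injective (hM : M.IsPerfectMatching) : Injective hM.mate :=
  Involutive.injective hM.mate_mate

theorem ncard_le_ncard_of_forall_adj [Finite V] (hM : M.IsPerfectMatching) {S T : Set V}
    (hST : ∀ s ∈ S, ∀ v, M.Adj s v → v ∈ T) : S.ncard ≤ T.ncard :=
  Set.ncard_le_ncard_of_injOn hM.mate (fun s hs => hST s hs _ (hM.adj_mate s))
    hM.mate_injective.injOn

theorem mate_mem_of_ncard_le [Finite V] (hM : M.IsPerfectMatching) {S T : Set V}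
    (hST : ∀ s ∈ S, hM.mate s ∈ T) (hTS : T.ncard ≤ S.ncard) {t : V} (ht : t ∈ T) :
    hM.mate t ∈ S := by
  have himage : hM.mate '' S = T := Set.eq_of_subset_of_ncard_le
    (Set.image_subset_iff.mpr hST)
    (by rwa [Set.ncard_image_of_injective _ hM.mate_injective]) (Set.toFinite _)
  obtain ⟨s, hs, rfl⟩ := himage ▸ ht
  rwa [mate_mate]

end Subgraph.IsPerfectMatching

theorem Reachable.mem_of_forall_adj {C : Set V} (hC : ∀ u v, G.Adj u v → u ∈ C → v ∈ C)
    {u v : V} (huv : G.Reachable u v) (hu : u ∈ C) : v ∈ C := by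
  obtain ⟨p⟩ := huv
  induction p with
  | nil => exact hu
  | cons h _ ih => exact ih (hC _ _ h hu)

def nbhd (H : SimpleGraph V) (S : Set V) : Set V := {v | ∃ s ∈ S, H.Adj s v}

end SimpleGraph

open SimpleGraph

theorem MatchingCovered.exists_isPerfectMatching {V : Type*} [Finite V] {H : SimpleGraph V}
    (hH : MatchingCovered H) : ∃ M : H.Subgraph, M.IsPerfectMatching := by
  have : Nontrivial V := Finite.one_lt_card_iff_nontrivial.mp hH.1
  obtain ⟨v⟩ := hH.2.1.nonempty
  obtain ⟨w, hvw⟩ := hH.2.1.preconnected.exists_adj_of_nontrivial v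
  obtain ⟨M, hM, -⟩ := hH.2.2 s(v, w) hvw
  exact ⟨M, hM⟩

namespace BipartitionOf

variable {V : Type*} {H : SimpleGraph V} {A B : Set V}

theorem mem_or_mem (hP : BipartitionOf H A B) (v : V) : v ∈ A ∨ v ∈ B := by
  rw [← Set.mem_union, hP.1]; trivial

theorem notMem_right (hP : BipartitionOf H A B) {v : V} (hv : v ∈ A) : v ∉ B :=
  Set.disjoint_left.mp hP.2.1 hv

theorem notMem_left (hP : BipartitionOf H A B) {v : V} (hv : v ∈ B) : v ∉ A :=
  Set.disjoint_right.mp hP.2.1 hv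

theorem symm (hP : BipartitionOf H A B) : BipartitionOf H B A :=
  ⟨by rw [Set.union_comm, hP.1], hP.2.1.symm, fun _ _ h => (hP.2.2 h.symm).symm⟩

theorem mem_right_of_adj (hP : BipartitionOf H A B) {u v : V} (h : H.Adj u v) (hu : u ∈ A) :
    v ∈ B :=
  (hP.2.2 h).mp hu

theorem mem_left_of_adj (hP : BipartitionOf H A B) {u v : V} (h : H.Adj u v) (hu : u ∈ B) :
    v ∈ A :=
  hP.symm.mem_right_of_adj h hu

theorem mono (hP : BipartitionOf H A B) {H' : SimpleGraph V} (hle : H' ≤ H) :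
    BipartitionOf H' A B :=
  ⟨hP.1, hP.2.1, fun _ _ h => hP.2.2 (hle h)⟩

theorem nbhd_subset (hP : BipartitionOf H A B) {S : Set V} (hS : S ⊆ A) : H.nbhd S ⊆ B := by
  rintro v ⟨s, hs, hsv⟩
  exact hP.mem_right_of_adj hsv (hS hs)

theorem ncard_add_ncard (hP : BipartitionOf H A B) [Finite V] :
    A.ncard + B.ncard = Nat.card V := by
  rw [← Set.ncard_union_eq hP.2.1, hP.1, Set.ncard_univ]

theorem ncard_eq (hP : BipartitionOf H A B) [Finite V] {M : H.Subgraph}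
    (hM : M.IsPerfectMatching) : A.ncard = B.ncard :=
  le_antisymm
    (hM.ncard_le_ncard_of_forall_adj fun _ hs _ h => hP.mem_right_of_adj (M.adj_sub h) hs)
    (hM.ncard_le_ncard_of_forall_adj fun _ hs _ h => hP.mem_left_of_adj (M.adj_sub h) hs)

theorem ncard_add_one_le_ncard_nbhd (hP : BipartitionOf H A B) [Finite V]
    (hMC : MatchingCovered H) {S : Set V} (hSA : S ⊆ A) (hS : S.Nonempty) {z : V} (hz : z ∈ A)
    (hzS : z ∉ S) : S.ncard + 1 ≤ (H.nbhd S).ncard := by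
  obtain ⟨M₀, hM₀⟩ := hMC.exists_isPerfectMatching
  have hle : S.ncard ≤ (H.nbhd S).ncard :=
    hM₀.ncard_le_ncard_of_forall_adj fun s hs v h => ⟨s, hs, M₀.adj_sub h⟩
  refine Nat.succ_le_of_lt (lt_of_le_of_ne hle fun heq => ?_)
  -- Every perfect matching then matches `N(S)` into `S`, so no edge leaves `S ∪ N(S)`.
  have hclosed : ∀ u v, H.Adj u v → u ∈ S ∪ H.nbhd S → v ∈ S ∪ H.nbhd S := by
    rintro u v huv (hu | hu)
    · exact Or.inr ⟨u, hu, huv⟩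
    · obtain ⟨M, hM, huvM⟩ := hMC.2.2 s(u, v) huv
      rw [hM.eq_mate_of_adj (Subgraph.mem_edgeSet.mp huvM)]
      exact Or.inl (hM.mate_mem_of_ncard_le (T := H.nbhd S)
        (fun s hs => ⟨s, hs, M.adj_sub (hM.adj_mate s)⟩) heq.ge hu)
  obtain ⟨s, hs⟩ := hS
  rcases (hMC.2.1.preconnected s z).mem_of_forall_adj hclosed (Or.inl hs) with h | h
  · exact hzS h
  · exact hP.notMem_right hz (hP.nbhd_subset hSA h)

theorem eq_and_eq_of_mk_eq (hP : BipartitionOf H A B) {a b c v : V} (hc : c ∈ A) (hb : b ∈ B)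
    (h : s(c, v) = s(a, b)) : c = a ∧ v = b := by
  rcases Sym2.eq_iff.mp h with h | ⟨rfl, -⟩
  · exact h
  · exact absurd hb (hP.notMem_right hc)

theorem exists_eq_mk_of_mem_edgeSet (hP : BipartitionOf H A B) {e : Sym2 V}
    (he : e ∈ H.edgeSet) : ∃ x ∈ A, ∃ y ∈ B, H.Adj x y ∧ e = s(x, y) := by
  induction e using Sym2.ind with
  | _ u v =>
    rcases hP.mem_or_mem u with hu | hu
    · exact ⟨u, hu, v, hP.mem_right_of_adj he hu, he, rfl⟩
    · exact ⟨v, hP.mem_left_of_adj he hu, u, hu, he.symm, Sym2.eq_swap⟩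

/-- Hall's theorem for `A \ {x}` in `H - x - y`, glued with the edge `xy`. -/
theorem exists_isPerfectMatching_adj_of_forall_ncard_le (hP : BipartitionOf H A B) [Finite V]
    (hAB : A.ncard = B.ncard) {x y : V} (hx : x ∈ A) (hy : y ∈ B) (hxy : H.Adj x y)
    (hall : ∀ T ⊆ A \ {x}, T.ncard ≤ (H.nbhd T \ {y}).ncard) :
    ∃ M : H.Subgraph, M.IsPerfectMatching ∧ M.Adj x y := by
  classical
  have := Fintype.ofFinite V
  obtain ⟨g, hg, hgadj⟩ := (Fintype.all_card_le_filter_rel_iff_exists_injective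
    fun (c : ↥(A \ {x})) (d : ↥(B \ {y})) => H.Adj c d).mp fun F => by
      calc F.card = (Subtype.val '' (F : Set ↥(A \ {x}))).ncard := by
            rw [Set.ncard_image_of_injective _ Subtype.val_injective, Set.ncard_coe_finset]
        _ ≤ (H.nbhd (Subtype.val '' (F : Set ↥(A \ {x}))) \ {y}).ncard :=
            hall _ (by rintro _ ⟨c, -, rfl⟩; exact c.2)
        _ ≤ (Subtype.val '' ((Finset.univ.filter fun d : ↥(B \ {y}) =>
              ∃ c ∈ F, H.Adj c d : Finset _) : Set ↥(B \ {y}))).ncard := by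
            refine Set.ncard_le_ncard ?_ (Set.toFinite _)
            rintro v ⟨⟨_, ⟨c, hc, rfl⟩, hcv⟩, hvy⟩
            exact ⟨⟨v, hP.mem_right_of_adj hcv c.2.1, hvy⟩,
              Finset.mem_filter.mpr ⟨Finset.mem_univ _, c, hc, hcv⟩, rfl⟩
        _ = _ := by
            rw [Set.ncard_image_of_injective _ Subtype.val_injective, Set.ncard_coe_finset]
  have hcard : Nat.card ↥(B \ {y}) ≤ Nat.card ↥(A \ {x}) := by
    rw [Nat.card_coe_set_eq, Nat.card_coe_set_eq, Set.ncard_sdiff_singleton_of_mem hx,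
      Set.ncard_sdiff_singleton_of_mem hy, hAB]
  obtain ⟨M, hMverts, hM⟩ := Subgraph.IsMatching.exists_of_disjoint_sets_of_equiv
    (Set.disjoint_of_subset Set.sdiff_subset Set.sdiff_subset hP.2.1)
    (Equiv.ofBijective g (hg.bijective_of_nat_card_le hcard)) hgadj
  have hxy' := Subgraph.IsMatching.subgraphOfAdj hxy
  refine ⟨M ⊔ H.subgraphOfAdj hxy, ⟨hM.sup hxy' ?_, fun v => ?_⟩, by simp⟩
  · rw [hM.support_eq_verts, hxy'.support_eq_verts, hMverts, subgraphOfAdj_verts]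
    rw [Set.disjoint_left]
    rintro v (⟨hvA, hvx⟩ | ⟨hvB, hvy⟩) (rfl | rfl)
    exacts [hvx rfl, hP.notMem_right hvA hy, hP.notMem_right hx hvB, hvy rfl]
  · simp only [Subgraph.verts_sup, hMverts, subgraphOfAdj_verts]
    by_cases hvx : v = x
    · exact Or.inr (Or.inl hvx)
    by_cases hvy : v = y
    · exact Or.inr (Or.inr hvy)
    rcases hP.mem_or_mem v with hv | hv
    exacts [Or.inl (Or.inl ⟨hv, hvx⟩), Or.inl (Or.inr ⟨hv, hvy⟩)]

section DeleteEdge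

variable [Finite V] {a b : V}

theorem tight_of_ncard_nbhd_deleteEdges_le (hP : BipartitionOf H A B)
    (hMC : MatchingCovered H) (hb : b ∈ B) {T : Set V} (hTA : T ⊆ A) (hT : T.Nonempty)
    {z : V} (hz : z ∈ A) (hzT : z ∉ T) (hdef : ((H.deleteEdges {s(a, b)}).nbhd T).ncard ≤ T.ncard) :
    a ∈ T ∧ (∀ c ∈ T, H.Adj c b → c = a) ∧ (H.nbhd T).ncard = T.ncard + 1 := by
  set H' := H.deleteEdges {s(a, b)}
  have hsub : H.nbhd T ⊆ insert b (H'.nbhd T) := by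
    rintro v ⟨c, hc, hcv⟩
    by_cases h : s(c, v) = s(a, b)
    · exact Or.inl (hP.eq_and_eq_of_mk_eq (hTA hc) hb h).2
    · exact Or.inr ⟨c, hc, deleteEdges_adj.mpr ⟨hcv, h⟩⟩
  have hlow := hP.ncard_add_one_le_ncard_nbhd hMC hTA hT hz hzT
  have hup := (Set.ncard_le_ncard hsub).trans (Set.ncard_insert_le _ _)
  obtain ⟨v, ⟨c, hc, hcv⟩, hv⟩ :=
    Set.exists_mem_notMem_of_ncard_lt_ncard (s := H'.nbhd T) (t := H.nbhd T) (by omega)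
  have hcv' : s(c, v) = s(a, b) := by
    by_contra h
    exact hv ⟨c, hc, deleteEdges_adj.mpr ⟨hcv, h⟩⟩
  obtain ⟨rfl, rfl⟩ := hP.eq_and_eq_of_mk_eq (hTA hc) hb hcv'
  refine ⟨hc, fun c' hc' hc'v => by_contra fun hne => hv ⟨c', hc', ?_⟩, by omega⟩
  exact deleteEdges_adj.mpr ⟨hc'v, fun h => hne (hP.eq_and_eq_of_mk_eq (hTA hc') hb h).1⟩

theorem exists_deficient_of_not_connected_deleteEdges (hP : BipartitionOf H A B)
    (hMC : MatchingCovered H) (ha : a ∈ A) (hb : b ∈ B) {a' : V} (ha'b : H.Adj a' b)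
    (hne : a' ≠ a) (hdis : ¬ (H.deleteEdges {s(a, b)}).Connected) :
    ∃ T ⊆ A, T.Nonempty ∧ (∃ z ∈ A, z ∉ T) ∧
      ((H.deleteEdges {s(a, b)}).nbhd T).ncard ≤ T.ncard := by
  set H' := H.deleteEdges {s(a, b)}
  set X := {v | H'.Reachable a v}
  have hXc : ∀ u v, H'.Adj u v → u ∈ X → v ∈ X := fun _ _ huv hu => hu.trans huv.reachable
  have hbX : b ∉ X := by
    intro hbX
    have hclosed : ∀ u v, H.Adj u v → u ∈ X → v ∈ X := by
      intro u v huv hu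
      by_cases h : s(u, v) = s(a, b)
      · rcases Sym2.eq_iff.mp h with ⟨-, rfl⟩ | ⟨-, rfl⟩
        exacts [hbX, Reachable.rfl]
      · exact hXc u v (deleteEdges_adj.mpr ⟨huv, h⟩) hu
    have hall : ∀ v, H'.Reachable a v := fun v =>
      (hMC.2.1.preconnected a v).mem_of_forall_adj hclosed Reachable.rfl
    have : Nonempty V := ⟨a⟩
    exact hdis ⟨fun u v => (hall u).symm.trans (hall v)⟩
  have ha' : a' ∈ A := hP.mem_left_of_adj ha'b.symm hb
  have ha'X : a' ∉ X := fun h => hbX (hXc a' b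
    (deleteEdges_adj.mpr ⟨ha'b, fun h => hne (hP.eq_and_eq_of_mk_eq ha' hb h).1⟩) h)
  obtain ⟨M, hM⟩ := hMC.exists_isPerfectMatching
  refine ⟨X ∩ A, Set.inter_subset_right, ⟨a, Reachable.rfl, ha⟩, ⟨a', ha', fun h => ha'X h.1⟩,
    ?_⟩
  -- A perfect matching of `H` maps `X ∩ B` into `X ∩ A`, because `b ∉ X`.
  calc (H'.nbhd (X ∩ A)).ncard ≤ (X ∩ B).ncard := by
        refine Set.ncard_le_ncard ?_ (Set.toFinite _)
        rintro v ⟨c, hc, hcv⟩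
        exact ⟨hXc c v hcv hc.1, hP.mem_right_of_adj (deleteEdges_le _ hcv) hc.2⟩
    _ ≤ (X ∩ A).ncard := by
        refine hM.ncard_le_ncard_of_forall_adj fun w hw v hwv => ⟨hXc w v ?_ hw.1,
          hP.mem_left_of_adj (M.adj_sub hwv) hw.2⟩
        refine deleteEdges_adj.mpr ⟨M.adj_sub hwv, fun h => hbX ?_⟩
        obtain ⟨rfl, -⟩ := hP.symm.eq_and_eq_of_mk_eq hw.2 ha (h.trans Sym2.eq_swap)
        exact hw.1

theorem exists_deficient_of_forall_notMem_edgeSet (hP : BipartitionOf H A B)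
    (hMC : MatchingCovered H) {f : Sym2 V} (hf : f ∈ (H.deleteEdges {s(a, b)}).edgeSet)
    (hfM : ∀ M : (H.deleteEdges {s(a, b)}).Subgraph, M.IsPerfectMatching → f ∉ M.edgeSet) :
    ∃ T ⊆ A, T.Nonempty ∧ (∃ z ∈ A, z ∉ T) ∧
      ((H.deleteEdges {s(a, b)}).nbhd T).ncard ≤ T.ncard := by
  set H' := H.deleteEdges {s(a, b)}
  have hP' : BipartitionOf H' A B := hP.mono (deleteEdges_le _)
  obtain ⟨x, hx, y, hy, hxy, rfl⟩ := hP'.exists_eq_mk_of_mem_edgeSet hf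
  obtain ⟨M₀, hM₀⟩ := hMC.exists_isPerfectMatching
  by_contra! hno
  have hall : ∀ T ⊆ A \ {x}, T.ncard ≤ (H'.nbhd T \ {y}).ncard := by
    intro T hT
    rcases T.eq_empty_or_nonempty with rfl | hTne
    · simp
    have := hno T (hT.trans Set.sdiff_subset) hTne ⟨x, hx, fun h => (hT h).2 rfl⟩
    have := Set.ncard_le_ncard_sdiff_add_ncard (H'.nbhd T) {y}
    rw [Set.ncard_singleton] at this
    omega
  obtain ⟨M, hM, hMxy⟩ :=
    hP'.exists_isPerfectMatching_adj_of_forall_ncard_le (hP.ncard_eq hM₀) hx hy hxy hall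
  exact hfM M hM hMxy

/-- `H - ab` is disconnected or has an edge in no perfect matching; either way (by a count inside a
component, resp. by Hall's theorem) some nonempty proper subset of `A` is deficient in `H - ab`. -/
theorem exists_tight_of_not_removableEdge (hP : BipartitionOf H A B) (hMC : MatchingCovered H)
    (hab : H.Adj a b) (hb : b ∈ B) {a' : V} (ha'b : H.Adj a' b) (hne : a' ≠ a)
    (hnr : ¬ RemovableEdge H s(a, b)) :
    ∃ S ⊆ A, a ∈ S ∧ (∀ c ∈ S, H.Adj c b → c = a) ∧ (H.nbhd S).ncard = S.ncard + 1 := by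
  have ha : a ∈ A := hP.mem_left_of_adj hab.symm hb
  suffices ∃ T ⊆ A, T.Nonempty ∧ (∃ z ∈ A, z ∉ T) ∧
      ((H.deleteEdges {s(a, b)}).nbhd T).ncard ≤ T.ncard by
    obtain ⟨T, hTA, hT, ⟨z, hz, hzT⟩, hdef⟩ := this
    exact ⟨T, hTA, hP.tight_of_ncard_nbhd_deleteEdges_le hMC hb hTA hT hz hzT hdef⟩
  have hnmc : ¬ MatchingCovered (H.deleteEdges {s(a, b)}) := fun h => hnr ⟨hab, h⟩
  by_cases hconn : (H.deleteEdges {s(a, b)}).Connected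
  · obtain ⟨f, hf, hfM⟩ : ∃ f ∈ (H.deleteEdges {s(a, b)}).edgeSet,
        ∀ M : (H.deleteEdges {s(a, b)}).Subgraph, M.IsPerfectMatching → f ∉ M.edgeSet := by
      by_contra! h
      exact hnmc ⟨hMC.1, hconn, h⟩
    exact hP.exists_deficient_of_forall_notMem_edgeSet hMC hf hfM
  · exact hP.exists_deficient_of_not_connected_deleteEdges hMC ha hb ha'b hne hconn

end DeleteEdge

/-- Submodularity of `S ↦ |N(S)|`: the vertex `b` is counted in `N(S₁) ∩ N(S₂)` but not in
`N(S₁ ∩ S₂)`, so `S₁ ∩ S₂` and `S₁ ∪ S₂` cannot both have surplus. -/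
theorem disjoint_of_tight (hP : BipartitionOf H A B) [Finite V] (hMC : MatchingCovered H)
    {S₁ S₂ : Set V} (hS₁ : S₁ ⊆ A) (hS₂ : S₂ ⊆ A) (h₁ : (H.nbhd S₁).ncard = S₁.ncard + 1)
    (h₂ : (H.nbhd S₂).ncard = S₂.ncard + 1) {b : V} (hb₁ : b ∈ H.nbhd S₁)
    (hb₂ : b ∈ H.nbhd S₂) (hb : b ∉ H.nbhd (S₁ ∩ S₂)) {c : V} (hc : c ∈ A) (hc₁ : c ∉ S₁)
    (hc₂ : c ∉ S₂) : Disjoint S₁ S₂ := by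
  rw [Set.disjoint_iff_inter_eq_empty]
  by_contra hne
  have hinter : insert b (H.nbhd (S₁ ∩ S₂)) ⊆ H.nbhd S₁ ∩ H.nbhd S₂ := by
    rintro v (rfl | ⟨s, hs, hsv⟩)
    exacts [⟨hb₁, hb₂⟩, ⟨⟨s, hs.1, hsv⟩, ⟨s, hs.2, hsv⟩⟩]
  have hunion : H.nbhd (S₁ ∪ S₂) = H.nbhd S₁ ∪ H.nbhd S₂ := by
    ext v
    simp only [nbhd, Set.mem_union, Set.mem_ofPred_eq, or_and_right, exists_or]
  obtain ⟨s, hs⟩ := hb₁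
  have hlow₁ := hP.ncard_add_one_le_ncard_nbhd hMC (Set.inter_subset_left.trans hS₁)
    (Set.nonempty_iff_ne_empty.mpr hne) hc (fun h => hc₁ h.1)
  have hlow₂ := hP.ncard_add_one_le_ncard_nbhd hMC (Set.union_subset hS₁ hS₂)
    ⟨s, Or.inl hs.1⟩ hc (fun h => h.elim hc₁ hc₂)
  have := Set.ncard_le_ncard hinter
  rw [Set.ncard_insert_of_notMem hb] at this
  rw [hunion] at hlow₂
  have := Set.ncard_inter_add_ncard_union S₁ S₂
  have := Set.ncard_inter_add_ncard_union (H.nbhd S₁) (H.nbhd S₂)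
  omega

theorem disjoint_of_tight_of_adj (hP : BipartitionOf H A B) [Finite V]
    (hMC : MatchingCovered H) {b a₁ a₂ c : V} (hb : b ∈ B) (h₁ : H.Adj a₁ b)
    (h₂ : H.Adj a₂ b) (hc : H.Adj c b) (h₁₂ : a₁ ≠ a₂) (hc₁ : c ≠ a₁) (hc₂ : c ≠ a₂)
    {S₁ S₂ : Set V}
    (hS₁ : S₁ ⊆ A ∧ a₁ ∈ S₁ ∧ (∀ x ∈ S₁, H.Adj x b → x = a₁) ∧
      (H.nbhd S₁).ncard = S₁.ncard + 1)
    (hS₂ : S₂ ⊆ A ∧ a₂ ∈ S₂ ∧ (∀ x ∈ S₂, H.Adj x b → x = a₂) ∧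
      (H.nbhd S₂).ncard = S₂.ncard + 1) : Disjoint S₁ S₂ :=
  hP.disjoint_of_tight hMC hS₁.1 hS₂.1 hS₁.2.2.2 hS₂.2.2.2 ⟨a₁, hS₁.2.1, h₁⟩
    ⟨a₂, hS₂.2.1, h₂⟩
    (fun ⟨x, hx, hxb⟩ => h₁₂ ((hS₁.2.2.1 x hx.1 hxb).symm.trans (hS₂.2.2.1 x hx.2 hxb)))
    (hP.mem_left_of_adj hc.symm hb) (fun h => hc₁ (hS₁.2.2.1 c h hc))
    (fun h => hc₂ (hS₂.2.2.1 c h hc))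

end BipartitionOf

section Bicritical

variable {V : Type*} [Finite V] {G : SimpleGraph V}

theorem ncard_le_ncard_sdiff_of_hasPerfMatching_induce {U S T : Set V}
    (hN : HasPerfMatching (G.induce Uᶜ)) (hSU : Disjoint S U)
    (hST : ∀ s ∈ S, ∀ v, G.Adj s v → v ∈ T) : S.ncard ≤ (T \ U).ncard := by
  obtain ⟨N, hN⟩ := hN
  have h := hN.ncard_le_ncard_of_forall_adj (S := Subtype.val ⁻¹' S)
    (T := Subtype.val ⁻¹' (T \ U)) fun s hs v hsv => ⟨hST s hs v (N.adj_sub hsv), v.2⟩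
  rwa [Set.ncard_preimage_of_injective_subset_range Subtype.val_injective,
    Set.ncard_preimage_of_injective_subset_range Subtype.val_injective] at h
  · exact fun v hv => ⟨⟨v, hv.2⟩, rfl⟩
  · exact fun v hv => ⟨⟨v, Set.disjoint_left.mp hSU hv⟩, rfl⟩

theorem BicriticalGraph.ncard_add_two_le (hG : BicriticalGraph G) {S T : Set V}
    (hST : ∀ s ∈ S, ∀ v, G.Adj s v → v ∈ T) (hdisj : Disjoint S T) (hT : 1 < T.ncard) :
    S.ncard + 2 ≤ T.ncard := by
  obtain ⟨u, hu, w, hw, huw⟩ := (Set.one_lt_ncard_iff_nontrivial.mp hT)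
  have hsub : ({u, w} : Set V) ⊆ T := Set.insert_subset hu (Set.singleton_subset_iff.mpr hw)
  have := ncard_le_ncard_sdiff_of_hasPerfMatching_induce (hG.2 u w huw)
    (hdisj.mono_right hsub) hST
  rw [Set.ncard_sdiff hsub, Set.ncard_pair huw] at this
  omega

variable {α β : Sym2 V} {A B : Set V}

theorem RemovableDoubleton.exists_mem_forall_mem_left (hG : BicriticalGraph G)
    (hR : RemovableDoubleton G α β) (hP : BipartitionOf (G.deleteEdges {α, β}) A B) :
    ∃ γ ∈ ({α, β} : Set (Sym2 V)), ∀ v ∈ γ, v ∈ A := by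
  obtain ⟨M, hM⟩ := hR.2.2.2.2.exists_isPerfectMatching
  have hAB := hP.ncard_eq hM
  have hcard := hP.ncard_add_ncard
  have h4 := hG.1
  by_contra! h
  have hcross : ∀ s ∈ A, ∀ v, G.Adj s v → v ∈ B := by
    intro s hs v hsv
    by_contra hv
    have hvA : v ∈ A := (hP.mem_or_mem v).resolve_right hv
    by_cases hmem : s(s, v) ∈ ({α, β} : Set (Sym2 V))
    · obtain ⟨w, hw, hwA⟩ := h _ hmem
      rcases Sym2.mem_iff.mp hw with rfl | rfl
      exacts [hwA hs, hwA hvA]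
    · exact hv (hP.mem_right_of_adj (deleteEdges_adj.mpr ⟨hsv, hmem⟩) hs)
  have := hG.ncard_add_two_le hcross hP.2.1 (by omega)
  omega

theorem RemovableDoubleton.exists_forall_left_end_mem (hG : BicriticalGraph G)
    (hR : RemovableDoubleton G α β) (hP : BipartitionOf (G.deleteEdges {α, β}) A B) :
    ∃ γ : Sym2 V, ∀ e ∈ ({α, β} : Set (Sym2 V)), ∀ z ∈ e, z ∈ A → z ∈ γ := by
  obtain ⟨δ, hδ, hδB⟩ := hR.exists_mem_forall_mem_left hG hP.symm
  have key : ∀ z ∈ δ, z ∉ A := fun z hz => hP.notMem_left (hδB z hz)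
  rcases hδ with rfl | rfl
  · exact ⟨β, by rintro e (rfl | rfl) z hz hzA; exacts [absurd hzA (key z hz), hz]⟩
  · exact ⟨α, by rintro e (rfl | rfl) z hz hzA; exacts [hz, absurd hzA (key z hz)]⟩

/-- Otherwise `S` has the same `|S| + 1` neighbours in `G` as in `G - R`, too few for a
bicritical graph. -/
theorem BicriticalGraph.exists_mem_of_tight (hG : BicriticalGraph G) {R : Set (Sym2 V)}
    (hP : BipartitionOf (G.deleteEdges R) A B) {γ : Sym2 V}
    (hγ : ∀ e ∈ R, ∀ z ∈ e, z ∈ A → z ∈ γ) {S : Set V} (hSA : S ⊆ A) (hS : S.Nonempty)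
    (htight : ((G.deleteEdges R).nbhd S).ncard = S.ncard + 1) : ∃ z ∈ S, z ∈ γ := by
  by_contra! h
  have hST : ∀ s ∈ S, ∀ v, G.Adj s v → v ∈ (G.deleteEdges R).nbhd S := fun s hs v hsv =>
    ⟨s, hs, deleteEdges_adj.mpr
      ⟨hsv, fun hR => h s hs (hγ _ hR s (Sym2.mem_mk_left s v) (hSA hs))⟩⟩
  have hdisj : Disjoint S ((G.deleteEdges R).nbhd S) :=
    Set.disjoint_of_subset hSA (hP.nbhd_subset hSA) hP.2.1
  have := hG.ncard_add_two_le hST hdisj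
    (by rw [htight]; have := (Set.ncard_pos).mpr hS; omega)
  omega

end Bicritical

theorem BipartitionOf.false_of_three_not_removableEdge {V : Type*} [Finite V]
    {G : SimpleGraph V} {α β : Sym2 V} {A B : Set V} (hG : BicriticalGraph G)
    (hR : RemovableDoubleton G α β) (hP : BipartitionOf (G.deleteEdges {α, β}) A B) {b : V}
    (hb : b ∈ B) {a₁ a₂ a₃ : V} (h₁ : (G.deleteEdges {α, β}).Adj a₁ b)
    (h₂ : (G.deleteEdges {α, β}).Adj a₂ b) (h₃ : (G.deleteEdges {α, β}).Adj a₃ b)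
    (h₁₂ : a₁ ≠ a₂) (h₁₃ : a₁ ≠ a₃) (h₂₃ : a₂ ≠ a₃)
    (hn₁ : ¬ RemovableEdge (G.deleteEdges {α, β}) s(a₁, b))
    (hn₂ : ¬ RemovableEdge (G.deleteEdges {α, β}) s(a₂, b))
    (hn₃ : ¬ RemovableEdge (G.deleteEdges {α, β}) s(a₃, b)) : False := by
  have hMC : MatchingCovered (G.deleteEdges {α, β}) := hR.2.2.2.2
  obtain ⟨γ, hγ⟩ := hR.exists_forall_left_end_mem hG hP
  obtain ⟨S₁, hS₁⟩ := hP.exists_tight_of_not_removableEdge hMC h₁ hb h₂ h₁₂.symm hn₁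
  obtain ⟨S₂, hS₂⟩ := hP.exists_tight_of_not_removableEdge hMC h₂ hb h₁ h₁₂ hn₂
  obtain ⟨S₃, hS₃⟩ := hP.exists_tight_of_not_removableEdge hMC h₃ hb h₁ h₁₃ hn₃
  have d₁₂ := hP.disjoint_of_tight_of_adj hMC hb h₁ h₂ h₃ h₁₂ h₁₃.symm h₂₃.symm hS₁ hS₂
  have d₁₃ := hP.disjoint_of_tight_of_adj hMC hb h₁ h₃ h₂ h₁₃ h₁₂.symm h₂₃ hS₁ hS₃
  have d₂₃ := hP.disjoint_of_tight_of_adj hMC hb h₂ h₃ h₁ h₂₃ h₁₂ h₁₃ hS₂ hS₃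
  obtain ⟨z₁, hz₁, hz₁γ⟩ := hG.exists_mem_of_tight hP hγ hS₁.1 ⟨a₁, hS₁.2.1⟩ hS₁.2.2.2
  obtain ⟨z₂, hz₂, hz₂γ⟩ := hG.exists_mem_of_tight hP hγ hS₂.1 ⟨a₂, hS₂.2.1⟩ hS₂.2.2.2
  obtain ⟨z₃, hz₃, hz₃γ⟩ := hG.exists_mem_of_tight hP hγ hS₃.1 ⟨a₃, hS₃.2.1⟩ hS₃.2.2.2
  rw [(Sym2.mem_and_mem_iff (d₁₂.ne_of_mem hz₁ hz₂)).mp ⟨hz₁γ, hz₂γ⟩, Sym2.mem_iff] at hz₃γ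
  rcases hz₃γ with rfl | rfl
  exacts [d₁₃.ne_of_mem hz₁ hz₃ rfl, d₂₃.ne_of_mem hz₂ hz₃ rfl]

/-- at most two edges of `H = G − R` incident with any vertex are
non-removable in `H`. -/
theorem stmt7 {V : Type*} [Fintype V] (G : SimpleGraph V) (α β : Sym2 V)
    (hbrick : BrickGraph G) (hR : RemovableDoubleton G α β) (b : V) :
    Set.ncard {e : Sym2 V | e ∈ (G.deleteEdges {α, β}).edgeSet ∧ b ∈ e ∧
      ¬ RemovableEdge (G.deleteEdges {α, β}) e} ≤ 2 := by
  by_contra! h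
  obtain ⟨e₁, ⟨he₁, hb₁, hn₁⟩, e₂, ⟨he₂, hb₂, hn₂⟩, e₃, ⟨he₃, hb₃, hn₃⟩, h₁₂, h₁₃, h₂₃⟩ :=
    (Set.two_lt_ncard (Set.toFinite _)).mp h
  obtain ⟨a₁, rfl⟩ := Sym2.mem_iff_exists.mp hb₁
  obtain ⟨a₂, rfl⟩ := Sym2.mem_iff_exists.mp hb₂
  obtain ⟨a₃, rfl⟩ := Sym2.mem_iff_exists.mp hb₃
  rw [Sym2.eq_swap] at hn₁ hn₂ hn₃
  obtain ⟨A, B, hP, hb⟩ : ∃ A B, BipartitionOf (G.deleteEdges {α, β}) A B ∧ b ∈ B := by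
    obtain ⟨A, B, hP⟩ := hR.2.2.2.1
    exact (hP.mem_or_mem b).elim (fun hb => ⟨B, A, hP.symm, hb⟩) (fun hb => ⟨A, B, hP, hb⟩)
  exact hP.false_of_three_not_removableEdge hbrick.2 hR hb he₁.symm he₂.symm he₃.symm
    (fun h => h₁₂ (by rw [h])) (fun h => h₁₃ (by rw [h])) (fun h => h₂₃ (by rw [h]))
    hn₁ hn₂ hn₃
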